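/- Let a^E be a symmetric positive semidefinite bilinear form on a finite-dimensional space V and S^E a symmetric bilinear form satisfying c₀ a^E(τ,τ) ≤ S^E(τ,τ) ≤ c₁ a^E(τ,τ) for all τ in the kernel of a projector Π (i.e., with Πτ = 0), where Π: V → P ⊂ V is a projector satisfying a^E(p, Πτ) = a^E(p, τ) for all p ∈ P. Define a_h^E(γ,τ) := a^E(Πγ, Πτ) + S^E(γ − Πγ, τ − Πτ). Then there exist positive constants α_* = min(1, c₀) and α* = max(1, c₁) such that α_* a^E(τ,τ) ≤ a_h^E(τ,τ) ≤ α* a^E(τ,τ) for all τ ∈ V. -/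
import Mathlib


/-- Stability sandwich for the VEM bilinear form: with `proj` an
`a^E`-orthogonal projector onto `P ⊆ V` and `S^E` equivalent to `a^E` on the kernel of
`proj`, the discrete form `a_h^E(γ,τ) = a^E(proj γ, proj τ) + S^E(γ − proj γ, τ − proj τ)`
satisfies `min(1,c₀) a^E(τ,τ) ≤ a_h^E(τ,τ) ≤ max(1,c₁) a^E(τ,τ)` for all `τ ∈ V`. -/
theorem vem_stability
    {V : Type*} [AddCommGroup V] [Module ℝ V] [FiniteDimensional ℝ V]
    (P : Submodule ℝ V)
    (aE S : V →ₗ[ℝ] V →ₗ[ℝ] ℝ)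
    (haSym : ∀ x y : V, aE x y = aE y x) (haPsd : ∀ x : V, 0 ≤ aE x x)
    (hSsym : ∀ x y : V, S x y = S y x)
    (proj : V →ₗ[ℝ] V)
    (hrange : ∀ τ : V, proj τ ∈ P) (hproj : ∀ p ∈ P, proj p = p)
    (horth : ∀ p ∈ P, ∀ τ : V, aE p (proj τ) = aE p τ)
    (c0 c1 : ℝ) (hc0 : 0 < c0) (hc1 : 0 < c1)
    (hS : ∀ τ : V, proj τ = 0 → c0 * aE τ τ ≤ S τ τ ∧ S τ τ ≤ c1 * aE τ τ) :
    ∀ τ : V,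
      min 1 c0 * aE τ τ ≤ aE (proj τ) (proj τ) + S (τ - proj τ) (τ - proj τ) ∧
      aE (proj τ) (proj τ) + S (τ - proj τ) (τ - proj τ) ≤ max 1 c1 * aE τ τ := by
  intro τ
  set r := τ - proj τ with hr
  have hker : proj r = 0 := by
    simp [hr, map_sub, hproj _ (hrange τ)]
  obtain ⟨hS0, hS1⟩ := hS r hker
  -- orthogonality: aE (proj τ) r = 0
  have horth' : aE (proj τ) r = 0 := by
    have h := horth (proj τ) (hrange τ) r
    rw [hker] at h
    simpa using h.symm
  -- Pythagoras
  have hpyth : aE τ τ = aE (proj τ) (proj τ) + aE r r := by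
    have hτ : τ = proj τ + r := by simp [hr]
    have h1 : aE r (proj τ) = 0 := by rw [haSym]; exact horth'
    calc aE τ τ = aE (proj τ + r) (proj τ + r) := by rw [← hτ]
      _ = aE (proj τ) (proj τ) + aE (proj τ) r + (aE r (proj τ) + aE r r) := by
          simp [map_add]; ring
      _ = aE (proj τ) (proj τ) + aE r r := by rw [horth', h1]; ring
  have hA : 0 ≤ aE (proj τ) (proj τ) := haPsd _
  have hR : 0 ≤ aE r r := haPsd _
  have hmin : min 1 c0 ≤ 1 := min_le_left _ _
  have hmin' : min 1 c0 ≤ c0 := min_le_right _ _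
  have hmax : (1:ℝ) ≤ max 1 c1 := le_max_left _ _
  have hmax' : c1 ≤ max 1 c1 := le_max_right _ _
  constructor
  · nlinarith [mul_le_mul_of_nonneg_right hmin hA, mul_le_mul_of_nonneg_right hmin' hR]
  · nlinarith [mul_le_mul_of_nonneg_right hmax hA, mul_le_mul_of_nonneg_right hmax' hR]
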